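/- Let N ≥ 2 and let m_1, …, m_N satisfy 0 < m_i < 1 for every i and m̄ := (1/N) Σ_{i=1}^N m_i > 1 − 2/N; set α := N/(N(m̄ − 1) + 2), σ_i := 1/N + (m̄ − m_i)/2. Let γ > 0 and 0 < ϑ_i ≤ 1 satisfy 1/(γ ϑ_i) < (1 − m_i)/2 for every i, and let A > 0 satisfy N γ m_i (γ m_i + 1) ϑ_i² A^{γ − γ m_i − 2/ϑ_i} ≥ α (γ max_j{σ_j ϑ_j} − 1) for every i. Then the function F̲(y) := (A + Σ_{i=1}^N |y_i|^{ϑ_i})^{−γ} satisfies: (a) the subsolution inequality Σ_{i=1}^N [∂²_{y_i y_i}(F̲^{m_i}) + α σ_i ∂_{y_i}(y_i F̲)] ≥ 0 at every point y ∈ ℝ^N with y_i ≠ 0 for all i; and (b) F̲ ∈ L¹(ℝ^N). -/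

import Mathlib

open MeasureTheory

/-- First partial derivative of `f` in the `i`-th coordinate direction. -/
noncomputable def pd1 {N : ℕ} (i : Fin N) (f : (Fin N → ℝ) → ℝ) (x : Fin N → ℝ) : ℝ :=
  deriv (fun s => f (Function.update x i s)) (x i)

/-- Second partial derivative of `f` in the `i`-th coordinate direction. -/
noncomputable def pd2 {N : ℕ} (i : Fin N) (f : (Fin N → ℝ) → ℝ) (x : Fin N → ℝ) : ℝ :=
  deriv (deriv (fun s => f (Function.update x i s))) (x i)

/-!
In the variable `y_i` the barrier is `(C + |y_i| ^ ϑ_i) ^ (-γ)`, so both terms of the operator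
are explicit. Write `S = A + ∑ |y_j| ^ ϑ_j`. Since `ϑ_i ≤ 1`, the second derivative of
`F̲ ^ m_i` is at least its convex part `γ m_i (γ m_i + 1) ϑ_i² |y_i| ^ (2ϑ_i - 2) S ^ (-γ m_i - 2)`,
and `|y_i| ^ ϑ_i ≤ S`, `A ≤ S` turn this into
`γ m_i (γ m_i + 1) ϑ_i² A ^ (γ - γ m_i - 2/ϑ_i) S ^ (-γ)`.
The drift terms add up to `α S ^ (-γ) (1 - γ ∑ σ_i ϑ_i |y_i| ^ ϑ_i / S) ≥ α (1 - γ M) S ^ (-γ)`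
with `M = max σ_j ϑ_j`, and the condition on `A` is exactly what compensates the deficit.

For integrability, weighted AM–GM with weights `w_i ∝ 1/ϑ_i` bounds `F̲` by the product of the
one-variable functions `(A + |y_i| ^ ϑ_i) ^ (-γ w_i)`, each integrable on `ℝ` because
`ϑ_i γ w_i = γ / ∑_j ϑ_j⁻¹ > 1`; summing `1/(γ ϑ_i) < (1 - m_i)/2` over `i` and using
`m̄ > 1 - 2/N` gives `∑_j ϑ_j⁻¹ < γ`.
-/

open Real Filter Topology

lemma abs_rpow_mul_self {s : ℝ} (hs : s ≠ 0) (e : ℝ) : |s| ^ e * s * s = |s| ^ (e + 2) := by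
  rw [mul_assoc, ← abs_mul_abs_self s, rpow_add (abs_pos.2 hs), rpow_two, sq]

lemma hasDerivAt_abs_rpow_of_ne_zero (ϑ : ℝ) {s : ℝ} (hs : s ≠ 0) :
    HasDerivAt (fun x : ℝ => |x| ^ ϑ) (ϑ * |s| ^ (ϑ - 2) * s) s := by
  have hϑ : ϑ - 1 = ϑ - 2 + 1 := by ring
  rcases hs.lt_or_gt with h | h
  · have hev : (fun x : ℝ => (-x) ^ ϑ) =ᶠ[𝓝 s] fun x => |x| ^ ϑ := by
      filter_upwards [Iio_mem_nhds h] with x hx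
      rw [abs_of_neg hx]
    refine (((hasDerivAt_rpow_const (Or.inl (neg_ne_zero.2 hs))).comp s
      (hasDerivAt_neg s)).congr_of_eventuallyEq hev.symm).congr_deriv ?_
    rw [abs_of_neg h, hϑ, rpow_add_one (neg_ne_zero.2 hs)]
    ring
  · have hev : (fun x : ℝ => x ^ ϑ) =ᶠ[𝓝 s] fun x => |x| ^ ϑ := by
      filter_upwards [Ioi_mem_nhds h] with x hx
      rw [abs_of_pos hx]
    refine ((hasDerivAt_rpow_const (Or.inl hs)).congr_of_eventuallyEq hev.symm).congr_deriv ?_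
    rw [abs_of_pos h, hϑ, rpow_add_one hs]
    ring

lemma hasDerivAt_add_abs_rpow_rpow (C ϑ p : ℝ) (hC : 0 ≤ C) {s : ℝ} (hs : s ≠ 0) :
    HasDerivAt (fun x : ℝ => (C + |x| ^ ϑ) ^ p)
      (p * (C + |s| ^ ϑ) ^ (p - 1) * (ϑ * |s| ^ (ϑ - 2) * s)) s := by
  have hpos : 0 < C + |s| ^ ϑ := by positivity
  convert ((hasDerivAt_abs_rpow_of_ne_zero ϑ hs).const_add C).rpow_const (p := p)
    (Or.inl hpos.ne') using 1
  ring

lemma hasDerivAt_mul_add_abs_rpow_rpow_neg (C ϑ γ : ℝ) (hC : 0 ≤ C) {s : ℝ} (hs : s ≠ 0) :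
    HasDerivAt (fun x : ℝ => x * (C + |x| ^ ϑ) ^ (-γ))
      ((C + |s| ^ ϑ) ^ (-γ) - γ * ϑ * |s| ^ ϑ * (C + |s| ^ ϑ) ^ (-γ - 1)) s := by
  refine ((hasDerivAt_id s).mul (hasDerivAt_add_abs_rpow_rpow C ϑ (-γ) hC hs)).congr_deriv ?_
  have hϑ : |s| ^ (ϑ - 2) * s * s = |s| ^ ϑ := by rw [abs_rpow_mul_self hs]; ring_nf
  rw [id, ← hϑ]
  ring

lemma deriv_deriv_add_abs_rpow_rpow_neg (C ϑ q : ℝ) (hC : 0 ≤ C) {s : ℝ} (hs : s ≠ 0) :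
    deriv (deriv (fun x : ℝ => (C + |x| ^ ϑ) ^ (-q))) s
      = q * (q + 1) * ϑ ^ 2 * |s| ^ (2 * ϑ - 2) * (C + |s| ^ ϑ) ^ (-q - 2)
        - q * ϑ * (ϑ - 1) * |s| ^ (ϑ - 2) * (C + |s| ^ ϑ) ^ (-q - 1) := by
  have hderiv : deriv (fun x : ℝ => (C + |x| ^ ϑ) ^ (-q)) =ᶠ[𝓝 s]
      fun x => -(q * ϑ) * ((C + |x| ^ ϑ) ^ (-q - 1) * (|x| ^ (ϑ - 2) * x)) := by
    filter_upwards [compl_singleton_mem_nhds hs] with x hx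
    rw [(hasDerivAt_add_abs_rpow_rpow C ϑ (-q) hC hx).deriv]
    ring
  have h2 : HasDerivAt
      (fun x : ℝ => -(q * ϑ) * ((C + |x| ^ ϑ) ^ (-q - 1) * (|x| ^ (ϑ - 2) * x))) _ s :=
    ((hasDerivAt_add_abs_rpow_rpow C ϑ (-q - 1) hC hs).mul
      ((hasDerivAt_abs_rpow_of_ne_zero (ϑ - 2) hs).mul (hasDerivAt_id' s))).const_mul (-(q * ϑ))
  rw [hderiv.deriv_eq, h2.deriv, Pi.mul_apply]
  have e1 : |s| ^ (ϑ - 2 - 2) * s * s = |s| ^ (ϑ - 2) := by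
    rw [abs_rpow_mul_self hs]; ring_nf
  have e2 : |s| ^ (ϑ - 2) * s * (|s| ^ (ϑ - 2) * s) = |s| ^ (2 * ϑ - 2) := by
    rw [← mul_assoc, mul_right_comm _ s, ← rpow_add (abs_pos.2 hs), abs_rpow_mul_self hs]
    ring_nf
  rw [show -q - 1 - 1 = -q - 2 by ring, ← e2, ← e1]
  ring

noncomputable def lowerBarrier {ι : Type*} [Fintype ι] (A γ : ℝ) (ϑ y : ι → ℝ) : ℝ :=
  (A + ∑ i, |y i| ^ ϑ i) ^ (-γ)

section CoordinateSections

variable {N : ℕ} {A : ℝ} (γ : ℝ) (ϑ : Fin N → ℝ) {y : Fin N → ℝ} (i : Fin N)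

lemma add_sum_abs_rpow_update (s : ℝ) :
    A + ∑ j, |Function.update y i s j| ^ ϑ j
      = (A + ∑ j ∈ Finset.univ \ {i}, |y j| ^ ϑ j) + |s| ^ ϑ i := by
  have hupdate : (fun j => |Function.update y i s j| ^ ϑ j)
      = Function.update (fun j => |y j| ^ ϑ j) i (|s| ^ ϑ i) :=
    funext (Function.apply_update (fun j x => |x| ^ ϑ j) y i s)
  rw [hupdate, Finset.sum_update_of_mem (Finset.mem_univ i)]
  ring

lemma pd2_lowerBarrier_rpow (hA : 0 ≤ A) (μ : ℝ) {S : ℝ} (hS : A + ∑ j, |y j| ^ ϑ j = S)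
    (hy : y i ≠ 0) :
    pd2 i (fun z => lowerBarrier A γ ϑ z ^ μ) y
      = γ * μ * (γ * μ + 1) * ϑ i ^ 2 * |y i| ^ (2 * ϑ i - 2) * S ^ (-(γ * μ) - 2)
        - γ * μ * ϑ i * (ϑ i - 1) * |y i| ^ (ϑ i - 2) * S ^ (-(γ * μ) - 1) := by
  have hC : 0 ≤ A + ∑ j ∈ Finset.univ \ {i}, |y j| ^ ϑ j := by positivity
  have hsection : (fun s => lowerBarrier A γ ϑ (Function.update y i s) ^ μ)
      = fun s => (A + ∑ j ∈ Finset.univ \ {i}, |y j| ^ ϑ j + |s| ^ ϑ i) ^ (-(γ * μ)) := by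
    funext s
    rw [lowerBarrier, add_sum_abs_rpow_update, ← rpow_mul (by positivity), neg_mul]
  rw [pd2, hsection, deriv_deriv_add_abs_rpow_rpow_neg _ _ _ hC hy, ← hS,
    ← add_sum_abs_rpow_update ϑ i (y i), Function.update_eq_self]

lemma pd1_mul_lowerBarrier (hA : 0 ≤ A) {S : ℝ} (hS : A + ∑ j, |y j| ^ ϑ j = S)
    (hy : y i ≠ 0) :
    pd1 i (fun z => z i * lowerBarrier A γ ϑ z) y
      = S ^ (-γ) - γ * ϑ i * |y i| ^ ϑ i * S ^ (-γ - 1) := by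
  have hC : 0 ≤ A + ∑ j ∈ Finset.univ \ {i}, |y j| ^ ϑ j := by positivity
  have hsection : (fun s => Function.update y i s i * lowerBarrier A γ ϑ (Function.update y i s))
      = fun s => s * (A + ∑ j ∈ Finset.univ \ {i}, |y j| ^ ϑ j + |s| ^ ϑ i) ^ (-γ) := by
    funext s
    rw [lowerBarrier, add_sum_abs_rpow_update, Function.update_self]
  rw [pd1, hsection, (hasDerivAt_mul_add_abs_rpow_rpow_neg _ _ _ hC hy).deriv, ← hS,
    ← add_sum_abs_rpow_update ϑ i (y i), Function.update_eq_self]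

end CoordinateSections

lemma rpow_two_sub_two_div_le {r S ϑ : ℝ} (hr : 0 < r) (hϑ : 0 < ϑ) (hϑ1 : ϑ ≤ 1)
    (hrS : r ^ ϑ ≤ S) : S ^ (2 - 2 / ϑ) ≤ r ^ (2 * ϑ - 2) := by
  have hexp : 2 - 2 / ϑ = (2 * ϑ - 2) / ϑ := by field_simp
  have hr' : r ^ (2 * ϑ - 2) = (r ^ ϑ) ^ ((2 * ϑ - 2) / ϑ) := by
    rw [← rpow_mul hr.le, mul_div_cancel₀ _ hϑ.ne']
  rw [hexp, hr']
  exact rpow_le_rpow_of_nonpos (by positivity) hrS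
    (div_nonpos_of_nonpos_of_nonneg (by linarith) hϑ.le)

lemma pd2_lowerBarrier_rpow_ge {N : ℕ} {A γ μ S : ℝ} {ϑ y : Fin N → ℝ} {i : Fin N}
    (hA : 0 < A) (hμ : 0 ≤ μ) (hγ : 0 ≤ γ) (hϑ : 0 < ϑ i) (hϑ1 : ϑ i ≤ 1)
    (hexp : 2 / ϑ i ≤ γ - γ * μ) (hS : A + ∑ j, |y j| ^ ϑ j = S) (hy : y i ≠ 0) :
    γ * μ * (γ * μ + 1) * ϑ i ^ 2 * A ^ (γ - γ * μ - 2 / ϑ i) * S ^ (-γ)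
      ≤ pd2 i (fun z => lowerBarrier A γ ϑ z ^ μ) y := by
  have hr : 0 < |y i| := abs_pos.2 hy
  have hAS : A ≤ S := hS ▸ le_add_of_nonneg_right (by positivity)
  have hS0 : 0 < S := hA.trans_le hAS
  have hrS : |y i| ^ ϑ i ≤ S := hS ▸ le_add_of_nonneg_of_le hA.le
    (Finset.single_le_sum (f := fun j => |y j| ^ ϑ j) (fun j _ => by positivity)
      (Finset.mem_univ i))
  rw [pd2_lowerBarrier_rpow γ ϑ i hA.le μ hS hy]
  have hconcave : 0 ≤ -(γ * μ * ϑ i * (ϑ i - 1) * |y i| ^ (ϑ i - 2) * S ^ (-(γ * μ) - 1)) := by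
    have : 0 ≤ γ * μ * ϑ i * (1 - ϑ i) * |y i| ^ (ϑ i - 2) * S ^ (-(γ * μ) - 1) := by
      have := sub_nonneg.2 hϑ1
      positivity
    linarith
  have hpow : A ^ (γ - γ * μ - 2 / ϑ i) * S ^ (-γ) ≤ |y i| ^ (2 * ϑ i - 2) * S ^ (-(γ * μ) - 2) :=
    calc A ^ (γ - γ * μ - 2 / ϑ i) * S ^ (-γ)
        ≤ S ^ (γ - γ * μ - 2 / ϑ i) * S ^ (-γ) := by
          gcongr
      _ = S ^ (2 - 2 / ϑ i) * S ^ (-(γ * μ) - 2) := by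
          rw [← rpow_add hS0, ← rpow_add hS0]
          ring_nf
      _ ≤ |y i| ^ (2 * ϑ i - 2) * S ^ (-(γ * μ) - 2) := by
          gcongr
          exact rpow_two_sub_two_div_le hr hϑ hϑ1 hrS
  have hcoeff : 0 ≤ γ * μ * (γ * μ + 1) * ϑ i ^ 2 := by positivity
  linarith [mul_le_mul_of_nonneg_left hpow hcoeff]

lemma sum_add_mul_one_sub_nonneg {ι : Type*} [Fintype ι] (c σ ϑ t : ι → ℝ) {α γ M S : ℝ}
    (hα : 0 ≤ α) (hγ : 0 ≤ γ) (hM : ∀ i, σ i * ϑ i ≤ M) (hM0 : 0 ≤ M) (hσ : ∑ i, σ i = 1)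
    (hc : α * (γ * M - 1) ≤ ∑ i, c i) (ht : ∀ i, 0 ≤ t i) (hS : 0 < S) (htS : ∑ i, t i ≤ S) :
    0 ≤ ∑ i, (c i + α * σ i * (1 - γ * ϑ i * t i / S)) := by
  have hdrift : ∑ i, σ i * ϑ i * t i ≤ M * S :=
    calc ∑ i, σ i * ϑ i * t i ≤ ∑ i, M * t i :=
          Finset.sum_le_sum fun i _ => mul_le_mul_of_nonneg_right (hM i) (ht i)
      _ ≤ M * S := by rw [← Finset.mul_sum]; exact mul_le_mul_of_nonneg_left htS hM0
  have hsum : ∑ i, (c i + α * σ i * (1 - γ * ϑ i * t i / S))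
      = ∑ i, c i + α * ∑ i, σ i - α * γ / S * ∑ i, σ i * ϑ i * t i := by
    rw [Finset.mul_sum, Finset.mul_sum, ← Finset.sum_add_distrib, ← Finset.sum_sub_distrib]
    refine Finset.sum_congr rfl fun i _ => ?_
    ring
  have hdrift' : α * γ / S * ∑ i, σ i * ϑ i * t i ≤ α * γ * M := by
    calc α * γ / S * ∑ i, σ i * ϑ i * t i ≤ α * γ / S * (M * S) := by gcongr
      _ = α * γ * M := by field_simp
  rw [hsum, hσ]
  linarith

theorem sum_pd2_add_pd1_lowerBarrier_nonneg {N : ℕ} {m σ ϑ : Fin N → ℝ} {α γ A M : ℝ}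
    (hm : ∀ i, 0 ≤ m i) (hϑ : ∀ i, 0 < ϑ i ∧ ϑ i ≤ 1) (hγ : 0 ≤ γ) (hA : 0 < A)
    (hexp : ∀ i, 2 / ϑ i ≤ γ - γ * m i) (hα : 0 ≤ α) (hσ : ∑ i, σ i = 1)
    (hM : ∀ i, σ i * ϑ i ≤ M) (hM0 : 0 ≤ M)
    (hAbig : α * (γ * M - 1)
      ≤ ∑ i, γ * m i * (γ * m i + 1) * ϑ i ^ 2 * A ^ (γ - γ * m i - 2 / ϑ i))
    {y : Fin N → ℝ} (hy : ∀ i, y i ≠ 0) :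
    0 ≤ ∑ i, (pd2 i (fun z => lowerBarrier A γ ϑ z ^ m i) y
      + α * σ i * pd1 i (fun z => z i * lowerBarrier A γ ϑ z) y) := by
  obtain ⟨S, hS⟩ : ∃ S, A + ∑ j, |y j| ^ ϑ j = S := ⟨_, rfl⟩
  have htS : ∑ j, |y j| ^ ϑ j ≤ S := hS ▸ le_add_of_nonneg_left hA.le
  have hS0 : 0 < S := hS ▸ by positivity
  have hterm : ∀ i, S ^ (-γ) * (γ * m i * (γ * m i + 1) * ϑ i ^ 2 * A ^ (γ - γ * m i - 2 / ϑ i)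
        + α * σ i * (1 - γ * ϑ i * |y i| ^ ϑ i / S))
      ≤ pd2 i (fun z => lowerBarrier A γ ϑ z ^ m i) y
        + α * σ i * pd1 i (fun z => z i * lowerBarrier A γ ϑ z) y := by
    intro i
    have hdiff := pd2_lowerBarrier_rpow_ge hA (hm i) hγ (hϑ i).1 (hϑ i).2 (hexp i) hS (hy i)
    have hdrift : S ^ (-γ - 1) = S ^ (-γ) / S := by rw [rpow_sub_one hS0.ne']
    rw [pd1_mul_lowerBarrier γ ϑ i hA.le hS (hy i), hdrift]
    have hsplit : S ^ (-γ) * (γ * m i * (γ * m i + 1) * ϑ i ^ 2 * A ^ (γ - γ * m i - 2 / ϑ i)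
        + α * σ i * (1 - γ * ϑ i * |y i| ^ ϑ i / S))
        = γ * m i * (γ * m i + 1) * ϑ i ^ 2 * A ^ (γ - γ * m i - 2 / ϑ i) * S ^ (-γ)
          + α * σ i * (S ^ (-γ) - γ * ϑ i * |y i| ^ ϑ i * (S ^ (-γ) / S)) := by ring
    linarith
  calc 0 ≤ S ^ (-γ) * ∑ i, (γ * m i * (γ * m i + 1) * ϑ i ^ 2 * A ^ (γ - γ * m i - 2 / ϑ i)
        + α * σ i * (1 - γ * ϑ i * |y i| ^ ϑ i / S)) :=
        mul_nonneg (by positivity) (sum_add_mul_one_sub_nonneg _ σ ϑ _ hα hγ hM hM0 hσ hAbig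
          (fun i => by positivity) hS0 htS)
    _ ≤ _ := by
      rw [Finset.mul_sum]
      exact Finset.sum_le_sum fun i _ => hterm i

lemma one_add_rpow_le_two_rpow_mul {r ϑ : ℝ} (hr : 0 ≤ r) (hϑ : 0 ≤ ϑ) :
    (1 + r) ^ ϑ ≤ 2 ^ ϑ * (1 + r ^ ϑ) :=
  calc (1 + r) ^ ϑ ≤ (2 * max 1 r) ^ ϑ := by
        gcongr
        linarith [le_max_left 1 r, le_max_right 1 r]
    _ = 2 ^ ϑ * max 1 (r ^ ϑ) := by
        rw [mul_rpow zero_le_two (by positivity), rpow_max zero_le_one hr hϑ, one_rpow]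
    _ ≤ 2 ^ ϑ * (1 + r ^ ϑ) := by
        gcongr
        exact max_le_add_of_nonneg zero_le_one (by positivity)

lemma integrable_add_abs_rpow_rpow_neg {b ϑ p : ℝ} (hb : 0 < b) (hϑ : 0 < ϑ)
    (hϑp : 1 < ϑ * p) : Integrable fun s : ℝ => (b + |s| ^ ϑ) ^ (-p) := by
  have hp : 0 < p := pos_of_mul_pos_right (one_pos.trans hϑp) hϑ.le
  set L : ℝ := 2 ^ ϑ * max 1 b⁻¹
  have hL : 0 < L := mul_pos (by positivity) (lt_max_of_lt_left one_pos)
  have hbound : ∀ s : ℝ, (1 + |s|) ^ ϑ ≤ L * (b + |s| ^ ϑ) := fun s =>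
    calc (1 + |s|) ^ ϑ ≤ 2 ^ ϑ * (1 + |s| ^ ϑ) := one_add_rpow_le_two_rpow_mul (abs_nonneg s) hϑ.le
      _ ≤ L * (b + |s| ^ ϑ) := by
        rw [mul_assoc]
        gcongr
        have : 0 ≤ |s| ^ ϑ := by positivity
        nlinarith [le_max_left 1 b⁻¹, le_max_right 1 b⁻¹, mul_inv_cancel₀ hb.ne']
  have hcont : Continuous fun s : ℝ => (b + |s| ^ ϑ) ^ (-p) :=
    (continuous_const.add (continuous_abs.rpow_const fun _ => Or.inr hϑ.le)).rpow_const
      fun s => Or.inl (add_pos_of_pos_of_nonneg hb (by positivity)).ne'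
  refine ((integrable_one_add_norm (E := ℝ) (r := ϑ * p) (by simpa using hϑp)).const_mul
    (L ^ p)).mono' hcont.aestronglyMeasurable (Eventually.of_forall fun s => ?_)
  have hbase : 0 < b + |s| ^ ϑ := by positivity
  rw [norm_of_nonneg (rpow_nonneg hbase.le _), norm_eq_abs]
  calc (b + |s| ^ ϑ) ^ (-p) = L ^ p * (L * (b + |s| ^ ϑ)) ^ (-p) := by
        rw [mul_rpow hL.le hbase.le, rpow_neg hL.le, rpow_neg hbase.le]
        field_simp
    _ ≤ L ^ p * ((1 + |s|) ^ ϑ) ^ (-p) := by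
        gcongr ?_ * ?_
        exact rpow_le_rpow_of_nonpos (by positivity) (hbound s) (neg_nonpos.2 hp.le)
    _ = L ^ p * (1 + |s|) ^ (-(ϑ * p)) := by
        rw [← rpow_mul (by positivity), mul_neg]

lemma add_sum_rpow_neg_le_prod {ι : Type*} [Fintype ι] {A γ : ℝ} {t w : ι → ℝ} (hA : 0 < A)
    (hγ : 0 ≤ γ) (ht : ∀ i, 0 ≤ t i) (hw : ∀ i, 0 ≤ w i) (hw1 : ∑ i, w i = 1) :
    (A + ∑ i, t i) ^ (-γ) ≤ ∏ i, (A + t i) ^ (-(γ * w i)) := by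
  have hpos : ∀ i, 0 < A + t i := fun i => by linarith [ht i]
  have hamgm : ∏ i, (A + t i) ^ w i ≤ A + ∑ i, t i :=
    calc ∏ i, (A + t i) ^ w i ≤ ∑ i, w i * (A + t i) :=
          geom_mean_le_arith_mean_weighted _ _ _ (fun i _ => hw i) hw1 fun i _ => (hpos i).le
      _ = A + ∑ i, w i * t i := by
          simp only [mul_add, Finset.sum_add_distrib, ← Finset.sum_mul, hw1, one_mul]
      _ ≤ A + ∑ i, t i := by
          gcongr with i
          exact mul_le_of_le_one_left (ht i)
            (hw1 ▸ Finset.single_le_sum (fun j _ => hw j) (Finset.mem_univ i))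
  calc (A + ∑ i, t i) ^ (-γ) ≤ (∏ i, (A + t i) ^ w i) ^ (-γ) :=
        rpow_le_rpow_of_nonpos (Finset.prod_pos fun i _ => rpow_pos_of_pos (hpos i) _) hamgm
          (by linarith)
    _ = ∏ i, (A + t i) ^ (-(γ * w i)) := by
        rw [← finsetProd_rpow _ _ fun i _ => rpow_nonneg (hpos i).le _]
        refine Finset.prod_congr rfl fun i _ => ?_
        rw [← rpow_mul (hpos i).le]
        ring_nf

lemma integrable_lowerBarrier {ι : Type*} [Fintype ι] [Nonempty ι] {A γ : ℝ} {ϑ : ι → ℝ}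
    (hA : 0 < A) (hϑ : ∀ i, 0 < ϑ i) (hγ : ∑ i, (ϑ i)⁻¹ < γ) :
    Integrable (lowerBarrier A γ ϑ) := by
  set W := ∑ i, (ϑ i)⁻¹
  have hW : 0 < W := Finset.sum_pos (fun i _ => inv_pos.2 (hϑ i)) Finset.univ_nonempty
  have hfactor : ∀ i, Integrable fun s : ℝ => (A + |s| ^ ϑ i) ^ (-(γ * ((ϑ i)⁻¹ / W))) := by
    intro i
    refine integrable_add_abs_rpow_rpow_neg hA (hϑ i) ?_
    have := (hϑ i).ne'
    rwa [show ϑ i * (γ * ((ϑ i)⁻¹ / W)) = γ / W by field_simp, one_lt_div hW]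
  refine (Integrable.fintype_prod hfactor).mono' ?_ (Eventually.of_forall fun y => ?_)
  · refine (Continuous.rpow_const ?_ fun y => Or.inl (by positivity)).aestronglyMeasurable
    exact continuous_const.add (continuous_finsetSum _ fun i _ =>
      (continuous_apply i).abs.rpow_const fun _ => Or.inr (hϑ i).le)
  · rw [lowerBarrier, norm_of_nonneg (by positivity)]
    exact add_sum_rpow_neg_le_prod hA (hW.trans hγ).le (fun i => by positivity)
      (fun i => div_nonneg (inv_pos.2 (hϑ i)).le hW.le) (by rw [← Finset.sum_div, div_self hW.ne'])

lemma sum_eq_one_of_eq_inv_add_half_sub {N : ℕ} {m σ : Fin N → ℝ} {mbar : ℝ} (hN : (N : ℝ) ≠ 0)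
    (hm : ∑ i, m i = N * mbar) (hσ : ∀ i, σ i = 1 / (N : ℝ) + (mbar - m i) / 2) :
    ∑ i, σ i = 1 := by
  simp only [hσ, Finset.sum_add_distrib, ← Finset.sum_div, Finset.sum_sub_distrib, hm,
    Finset.sum_const, Finset.card_univ, Fintype.card_fin, nsmul_eq_mul]
  field_simp
  ring

lemma le_sum_of_le_card_mul {ι : Type*} [Fintype ι] [Nonempty ι] {a : ℝ} {c : ι → ℝ}
    (h : ∀ i, a ≤ Fintype.card ι * c i) : a ≤ ∑ i, c i := by
  have hcard : (0 : ℝ) < Fintype.card ι := by exact_mod_cast Fintype.card_pos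
  have := Finset.card_nsmul_le_sum Finset.univ c (a / Fintype.card ι)
    fun i _ => by rw [div_le_iff₀ hcard, mul_comm]; exact h i
  rwa [Finset.card_univ, nsmul_eq_mul, mul_div_cancel₀ _ hcard.ne'] at this

lemma sum_inv_lt_of_lt_mul_one_sub {ι : Type*} [Fintype ι] [Nonempty ι] {γ : ℝ} {m ϑ : ι → ℝ}
    (hγ : 0 < γ) (hinv : ∀ i, (ϑ i)⁻¹ < γ * (1 - m i) / 2)
    (hm : (Fintype.card ι : ℝ) - ∑ i, m i < 2) : ∑ i, (ϑ i)⁻¹ < γ :=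
  calc ∑ i, (ϑ i)⁻¹ < ∑ i, γ * (1 - m i) / 2 :=
        Finset.sum_lt_sum_of_nonempty Finset.univ_nonempty fun i _ => hinv i
    _ = γ * (Fintype.card ι - ∑ i, m i) / 2 := by
        rw [← Finset.sum_div, ← Finset.mul_sum, Finset.sum_sub_distrib, Finset.sum_const,
          Finset.card_univ, nsmul_one]
    _ < γ := by nlinarith

/-- the anisotropic lower barrier `F̲(y) = (A + Σ_i |y_i|^{ϑ_i})^{-γ}` is a
subsolution of the stationary profile equation away from the coordinate hyperplanes, and
it is integrable on `ℝ^N`. -/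
theorem lower_barrier_subsolution (N : ℕ) (hN : 2 ≤ N) (m : Fin N → ℝ)
    (hm : ∀ i, 0 < m i ∧ m i < 1)
    (mbar α : ℝ) (σ : Fin N → ℝ)
    (hmbar : mbar = (1 / (N : ℝ)) * ∑ i, m i)
    (hH2 : 1 - 2 / (N : ℝ) < mbar)
    (hα : α = (N : ℝ) / ((N : ℝ) * (mbar - 1) + 2))
    (hσ : ∀ i, σ i = 1 / (N : ℝ) + (mbar - m i) / 2)
    (γ : ℝ) (hγ : 0 < γ) (ϑ : Fin N → ℝ) (hϑ : ∀ i, 0 < ϑ i ∧ ϑ i ≤ 1)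
    (hcond : ∀ i, 1 / (γ * ϑ i) < (1 - m i) / 2)
    (A : ℝ) (hA : 0 < A)
    (hAbig : ∀ i, α * (γ * (⨆ j, σ j * ϑ j) - 1) ≤
      (N : ℝ) * γ * m i * (γ * m i + 1) * ϑ i ^ 2 * A ^ (γ - γ * m i - 2 / ϑ i))
    (Funder : (Fin N → ℝ) → ℝ)
    (hFunder : ∀ y : Fin N → ℝ, Funder y = (A + ∑ i, |y i| ^ ϑ i) ^ (-γ)) :
    (∀ y : Fin N → ℝ, (∀ i, y i ≠ 0) →
      0 ≤ ∑ i, (pd2 i (fun z => Funder z ^ m i) y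
        + α * σ i * pd1 i (fun z => z i * Funder z) y)) ∧
    Integrable Funder := by
  obtain rfl : Funder = lowerBarrier A γ ϑ := funext hFunder
  have hN0 : (0 : ℝ) < N := by exact_mod_cast (by omega : 0 < N)
  let i₀ : Fin N := ⟨0, by omega⟩
  have : Nonempty (Fin N) := ⟨i₀⟩
  have hsum_m : ∑ i, m i = N * mbar := by rw [hmbar]; field_simp
  have hgap : N - ∑ i, m i < 2 := by
    have := mul_lt_mul_of_pos_left hH2 hN0
    rw [mul_sub, mul_div_cancel₀ _ hN0.ne'] at this
    linarith
  have hinv : ∀ i, (ϑ i)⁻¹ < γ * (1 - m i) / 2 := fun i => by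
    have := hcond i
    rwa [one_div, mul_inv, inv_mul_lt_iff₀ hγ, ← mul_div_assoc] at this
  have hα0 : 0 ≤ α := hα ▸ div_nonneg hN0.le (by linarith)
  have hexp : ∀ i, 2 / ϑ i ≤ γ - γ * m i := fun i => by
    rw [div_eq_mul_inv]; linarith [hinv i]
  have hM : ∀ i, σ i * ϑ i ≤ ⨆ j, σ j * ϑ j := le_ciSup (Set.finite_range _).bddAbove
  have hM0 : 0 ≤ ⨆ j, σ j * ϑ j := by
    refine (mul_nonneg ?_ (hϑ i₀).1.le).trans (hM i₀)
    rw [hσ i₀]; linarith [(hm i₀).2, show 2 / (N : ℝ) = 2 * (1 / N) by ring]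
  have hAsum : α * (γ * (⨆ j, σ j * ϑ j) - 1)
      ≤ ∑ i, γ * m i * (γ * m i + 1) * ϑ i ^ 2 * A ^ (γ - γ * m i - 2 / ϑ i) :=
    le_sum_of_le_card_mul fun i => by rw [Fintype.card_fin]; exact (hAbig i).trans_eq (by ring)
  exact ⟨fun y hy => sum_pd2_add_pd1_lowerBarrier_nonneg (fun i => (hm i).1.le) hϑ hγ.le hA
    hexp hα0 (sum_eq_one_of_eq_inv_add_half_sub hN0.ne' hsum_m hσ) hM hM0 hAsum hy,
    integrable_lowerBarrier hA (fun i => (hϑ i).1)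
      (sum_inv_lt_of_lt_mul_one_sub hγ hinv (by rwa [Fintype.card_fin]))⟩
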